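/- Let (X, ⊥) satisfy properties S and Z. Then for all A, B ⊆ X with A ⊥ B, one has A ⊕ B = cl(A ∪ B) and A^⊥ ⊗ B^⊥ = A^⊥ ∩ B^⊥. -/
import Mathlib


variable {X : Type*}

/-- Orthogonal complement: `A^⊥ = {b : b ⊥ a for all a ∈ A}`. -/
def oc (R : X → X → Prop) (A : Set X) : Set X := {b | ∀ a ∈ A, R b a}

/-- Closure: `cl(A) = (A^⊥)^⊥`. -/
def ocl (R : X → X → Prop) (A : Set X) : Set X := oc R (oc R A)

/-- The zero set `Z = {y : y ⊥ x for all x}`. -/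
def zset (R : X → X → Prop) : Set X := {y | ∀ x, R y x}

/-- Sasaki projection `A ⊗ B = cl(B) ∩ (cl(B) ∩ A^⊥)^⊥`. -/
def sproj (R : X → X → Prop) (A B : Set X) : Set X :=
  ocl R B ∩ oc R (ocl R B ∩ oc R A)

/-- Dual of the Sasaki projection: `A ⊕ B = (B^⊥ ⊗ A^⊥)^⊥`. -/
def sdual (R : X → X → Prop) (A B : Set X) : Set X :=
  oc R (sproj R (oc R B) (oc R A))

/-- Set orthogonality: `A ⊥ B` iff `a ⊥ b` for all `a ∈ A`, `b ∈ B`. -/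
def orth (R : X → X → Prop) (A B : Set X) : Prop := ∀ a ∈ A, ∀ b ∈ B, R a b

lemma subset_ocl (R : X → X → Prop) (hS : ∀ x y : X, R x y → R y x) (A : Set X) :
    A ⊆ ocl R A := fun a ha b hb => hS _ _ (hb a ha)

lemma oc_anti (R : X → X → Prop) {A B : Set X} (h : A ⊆ B) : oc R B ⊆ oc R A :=
  fun x hx a ha => hx a (h ha)

lemma oc_ocl (R : X → X → Prop) (hS : ∀ x y : X, R x y → R y x) (A : Set X) :
    oc R (ocl R A) = oc R A :=
  subset_antisymm (oc_anti R (subset_ocl R hS A)) (subset_ocl R hS (oc R A))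

lemma sproj_key (R : X → X → Prop) (hS : ∀ x y : X, R x y → R y x)
    {A B : Set X} (hAB : orth R A B) :
    sproj R (oc R A) (oc R B) = oc R A ∩ oc R B := by
  have hAoB : A ⊆ oc R B := fun a ha b hb => hAB a ha b hb
  have h1 : ocl R (oc R B) = oc R B := oc_ocl R hS B
  have h2 : ocl R A ⊆ oc R B := by
    have := oc_anti R (oc_anti R hAoB)
    calc ocl R A ⊆ oc R (oc R (oc R B)) := this
    _ = oc R B := oc_ocl R hS B
  have h3 : oc R B ∩ oc R (oc R A) = ocl R A :=
    Set.inter_eq_self_of_subset_right h2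
  unfold sproj
  rw [h1, h3, oc_ocl R hS A, Set.inter_comm]

theorem stmt4 (R : X → X → Prop)
    (hS : ∀ x y : X, R x y → R y x)
    (hZ : ∀ x : X, R x x → x ∈ zset R) :
    ∀ A B : Set X, orth R A B →
      sdual R A B = ocl R (A ∪ B) ∧
      sproj R (oc R A) (oc R B) = oc R A ∩ oc R B := by
  intro A B hAB
  have hBA : orth R B A := fun b hb a ha => hS _ _ (hAB a ha b hb)
  have h2 : sproj R (oc R A) (oc R B) = oc R A ∩ oc R B := sproj_key R hS hAB
  refine ⟨?_, h2⟩
  unfold sdual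
  rw [sproj_key R hS hBA]
  have : oc R (A ∪ B) = oc R B ∩ oc R A := by
    ext x
    constructor
    · intro hx
      exact ⟨fun b hb => hx b (Or.inr hb), fun a ha => hx a (Or.inl ha)⟩
    · rintro ⟨hxB, hxA⟩ a (ha | hb)
      · exact hxA a ha
      · exact hxB a hb
  rw [ocl, this]
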